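/- Define the covariance sequence P_k ∈ ℝ^{n_p×n_p} recursively by P_0 = P and P_{k+1} = (1/γ) P_k − (1/γ) P_k Γ_kᵀ (γ I_{n_x} + Γ_k P_k Γ_kᵀ)^{-1} Γ_k P_k. Then P_k is symmetric positive definite for every k ≥ 0. -/

import Mathlib

open Matrix

private lemma posDef_smul_aux {n : ℕ} {M : Matrix (Fin n) (Fin n) ℝ} (hM : M.PosDef)
    {c : ℝ} (hc : 0 < c) : (c • M).PosDef := by
  refine posDef_iff_dotProduct_mulVec.mpr ⟨?_, fun x hx => ?_⟩
  · unfold Matrix.IsHermitian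
    rw [conjTranspose_smul, hM.1]
    simp
  · simp only [smul_mulVec, dotProduct_smul, smul_eq_mul]
    exact mul_pos hc ((posDef_iff_dotProduct_mulVec.mp hM).2 hx)

private lemma posSemidef_smul_aux {n : ℕ} {M : Matrix (Fin n) (Fin n) ℝ} (hM : M.PosSemidef)
    {c : ℝ} (hc : 0 ≤ c) : (c • M).PosSemidef := by
  refine posSemidef_iff_dotProduct_mulVec.mpr ⟨?_, fun x => ?_⟩
  · unfold Matrix.IsHermitian
    rw [conjTranspose_smul, hM.1]
    simp
  · simp only [smul_mulVec, dotProduct_smul, smul_eq_mul]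
    exact mul_nonneg hc ((posSemidef_iff_dotProduct_mulVec.mp hM).2 x)

/-- The RLS covariance sequence, defined by `P_0 = P` and
`P_{k+1} = (1/γ) P_k − (1/γ) P_k Γ_kᵀ (γ I + Γ_k P_k Γ_kᵀ)⁻¹ Γ_k P_k`,
is symmetric positive definite for every `k ≥ 0`. -/
theorem rls_covariance_posDef
    (n_p n_x : ℕ) (hnp : 0 < n_p) (hnx : 0 < n_x)
    (γ : ℝ) (hγ0 : 0 < γ) (hγ1 : γ ≤ 1)
    (P : Matrix (Fin n_p) (Fin n_p) ℝ) (hP : P.PosDef)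
    (Γ : ℕ → Matrix (Fin n_x) (Fin n_p) ℝ)
    (Pm : ℕ → Matrix (Fin n_p) (Fin n_p) ℝ)
    (hPm0 : Pm 0 = P)
    (hPmrec : ∀ k, Pm (k + 1) =
        (1 / γ) • Pm k -
          (1 / γ) • (Pm k * (Γ k)ᵀ *
            (γ • (1 : Matrix (Fin n_x) (Fin n_x) ℝ) + Γ k * Pm k * (Γ k)ᵀ)⁻¹ *
            Γ k * Pm k)) :
    ∀ k : ℕ, (Pm k).PosDef := by
  intro k
  induction k with
  | zero => rw [hPm0]; exact hP
  | succ k ih =>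
    have hγne : γ ≠ 0 := ne_of_gt hγ0
    set Q := Pm k with hQ
    set G := Γ k with hG
    -- S = γ I + G Q Gᵀ is positive definite
    set S : Matrix (Fin n_x) (Fin n_x) ℝ := γ • 1 + G * Q * Gᵀ with hSdef
    have hGt : Gᵀ = Gᴴ := (conjTranspose_eq_transpose_of_trivial G).symm
    have hS : S.PosDef := by
      apply Matrix.PosDef.add_posSemidef
      · exact posDef_smul_aux Matrix.PosDef.one hγ0
      · rw [hGt]
        exact ih.posSemidef.mul_mul_conjTranspose_same G
    have hSinv : S⁻¹ * S = 1 := nonsing_inv_mul S ((Matrix.isUnit_iff_isUnit_det S).mp hS.isUnit)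
    -- key identity: S⁻¹ (G Q Gᵀ) G = G - γ • (S⁻¹ G)
    have hkey : S⁻¹ * (G * (Q * (Gᵀ * G))) = G - γ • (S⁻¹ * G) := by
      have h1 : S⁻¹ * (γ • 1 + G * Q * Gᵀ) * G = G := by
        rw [← hSdef, hSinv, Matrix.one_mul]
      simp only [Matrix.mul_add, Matrix.add_mul, Matrix.mul_smul, Matrix.smul_mul,
        Matrix.mul_one, Matrix.one_mul, Matrix.mul_assoc] at h1
      exact eq_sub_of_add_eq' h1
    -- M := Q - Q Gᵀ S⁻¹ G Q, N := Q⁻¹ + (1/γ) • (Gᵀ G)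
    set M : Matrix (Fin n_p) (Fin n_p) ℝ := Q - Q * Gᵀ * S⁻¹ * G * Q with hMdef
    set N : Matrix (Fin n_p) (Fin n_p) ℝ := Q⁻¹ + (1 / γ) • (Gᵀ * G) with hNdef
    have hQQ : Q * Q⁻¹ = 1 := mul_nonsing_inv Q ((Matrix.isUnit_iff_isUnit_det Q).mp ih.isUnit)
    have hMN : M * N = 1 := by
      rw [hMdef, hNdef]
      simp only [Matrix.sub_mul, Matrix.mul_add, Matrix.mul_smul, Matrix.smul_mul,
        smul_sub, smul_smul, Matrix.mul_assoc]
      rw [hQQ, Matrix.mul_one, hkey]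
      simp only [Matrix.mul_sub, Matrix.mul_smul, smul_sub, smul_smul]
      rw [one_div, inv_mul_cancel₀ hγne, one_smul]
      module
    have hN : N.PosDef := by
      apply Matrix.PosDef.add_posSemidef ih.inv
      apply posSemidef_smul_aux _ (by positivity)
      rw [hGt]
      exact posSemidef_conjTranspose_mul_self G
    have hM : M.PosDef := by
      have : N⁻¹ = M := inv_eq_left_inv hMN
      rw [← this]
      exact hN.inv
    have hstep : Pm (k + 1) = (1 / γ) • M := by
      rw [hPmrec k, hMdef, smul_sub]
    rw [hstep]
    exact posDef_smul_aux hM (by positivity)
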